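/- arXiv:math/0203024 — 2 statements merged into one kernel-verified Lean document; each statement's English description precedes it below -/
import Mathlib

section
/- Let β ∈ (1,2) and define T_β on [0, 1/(β-1)] \ (1/β, 1/(β(β-1))) by T_β(x) = βx for x ∈ [0, 1/β] and T_β(x) = βx - 1 for x ∈ [1/(β(β-1)), 1/(β-1)]. Then x ∈ (0, 1/(β-1)) has a unique binary β-representation if and only if the forward orbit of x under T_β is defined for all n ≥ 0 and never enters the gap Δ_β = [1/β, 1/(β(β-1))]. -/
/-!
Every point of `[0, 1/(β-1)]` has an expansion, the greedy one read off its `T_β`-orbit, and the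
expansions of `x` with first digit `d` are `d` followed by the expansions of `βx - d`. Off the gap
the first digit is forced by the size of `x`, so an orbit avoiding the gap determines every digit.
Conversely, a point of the gap has expansions starting with `0` and with `1`, while uniqueness of
the expansion of `y` passes to `T_β y` and hence along the whole orbit.
-/

open Filter Topology

namespace BetaExpansion

variable {β : ℝ}

noncomputable def value (β : ℝ) (ε : ℕ → ℕ) : ℝ := ∑' n : ℕ, (ε n : ℝ) / β ^ (n + 1)

def IsExpansion (β x : ℝ) (ε : ℕ → ℕ) : Prop := (∀ n, ε n ≤ 1) ∧ x = value β ε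

def gap (β : ℝ) : Set ℝ := Set.Icc (1 / β) (1 / (β * (β - 1)))

noncomputable def digit (β y : ℝ) : ℕ := if y < 1 / β then 0 else 1

/-- Unlike the paper's `T_β`, this is also defined on the gap, by the branch `βy - 1`, as in the
recursion of the statement. -/
noncomputable def T (β y : ℝ) : ℝ := if y < 1 / β then β * y else β * y - 1

lemma digit_le_one (β y : ℝ) : digit β y ≤ 1 := by
  unfold digit; split_ifs <;> norm_num

lemma T_eq (β y : ℝ) : T β y = β * y - digit β y := by
  unfold T digit; split_ifs <;> simp

lemma summable_geometric_div (hβ : 1 < β) : Summable fun n : ℕ => β⁻¹ ^ n / β :=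
  (summable_geometric_of_lt_one (by positivity) (inv_lt_one_of_one_lt₀ hβ)).div_const β

lemma div_pow_le_geometric (hβ : 0 < β) {ε : ℕ → ℕ} (hε : ∀ n, ε n ≤ 1) (n : ℕ) :
    (ε n : ℝ) / β ^ (n + 1) ≤ β⁻¹ ^ n / β :=
  calc (ε n : ℝ) / β ^ (n + 1) ≤ 1 / β ^ (n + 1) := by gcongr; exact_mod_cast hε n
    _ = β⁻¹ ^ n / β := by rw [pow_succ, inv_pow]; field_simp

lemma summable_div_pow (hβ : 1 < β) {ε : ℕ → ℕ} (hε : ∀ n, ε n ≤ 1) :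
    Summable fun n : ℕ => (ε n : ℝ) / β ^ (n + 1) :=
  .of_nonneg_of_le (fun n => by positivity) (div_pow_le_geometric (by linarith) hε)
    (summable_geometric_div hβ)

lemma value_nonneg (hβ : 0 ≤ β) (ε : ℕ → ℕ) : 0 ≤ value β ε :=
  tsum_nonneg fun n => by positivity

lemma value_le (hβ : 1 < β) {ε : ℕ → ℕ} (hε : ∀ n, ε n ≤ 1) : value β ε ≤ 1 / (β - 1) :=
  calc value β ε ≤ ∑' n : ℕ, β⁻¹ ^ n / β :=
        (summable_div_pow hβ hε).tsum_le_tsum (div_pow_le_geometric (by linarith) hε)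
          (summable_geometric_div hβ)
    _ = 1 / (β - 1) := by
        rw [tsum_div_const, tsum_geometric_of_lt_one (by positivity) (inv_lt_one_of_one_lt₀ hβ)]
        field_simp [(by linarith : β - 1 ≠ 0)]

lemma value_eq_head_add_tail (hβ : 1 < β) {ε : ℕ → ℕ} (hε : ∀ n, ε n ≤ 1) :
    value β ε = (ε 0 + value β fun n => ε (n + 1)) / β := by
  rw [value, (summable_div_pow hβ hε).tsum_eq_zero_add, value, add_div, ← tsum_div_const]
  congr 1
  · simp
  · exact tsum_congr fun n => by rw [pow_succ _ (n + 1), div_mul_eq_div_div]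

lemma mem_Icc_of_isExpansion (hβ : 1 < β) {x : ℝ} {ε : ℕ → ℕ} (h : IsExpansion β x ε) :
    x ∈ Set.Icc 0 (1 / (β - 1)) :=
  h.2 ▸ ⟨value_nonneg (by linarith) ε, value_le hβ h.1⟩

lemma IsExpansion.tail (hβ : 1 < β) {x : ℝ} {ε : ℕ → ℕ} (h : IsExpansion β x ε) :
    IsExpansion β (β * x - ε 0) fun n => ε (n + 1) := by
  refine ⟨fun n => h.1 (n + 1), ?_⟩
  rw [h.2, value_eq_head_add_tail hβ h.1]
  field_simp
  ring

lemma IsExpansion.cons (hβ : 1 < β) {y : ℝ} {d : ℕ} {δ : ℕ → ℕ}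
    (h : IsExpansion β (β * y - d) δ) (hd : d ≤ 1) : IsExpansion β y (Stream'.cons d δ) := by
  have hle : ∀ n, Stream'.cons d δ n ≤ 1 := fun
    | 0 => hd
    | n + 1 => h.1 n
  refine ⟨hle, ?_⟩
  rw [value_eq_head_add_tail hβ hle]
  change y = (d + value β δ) / β
  rw [← h.2]
  field_simp [(by linarith : β ≠ 0)]
  ring

lemma IsExpansion.head_eq_digit (hβ : 1 < β) {x : ℝ} {ε : ℕ → ℕ} (h : IsExpansion β x ε)
    (hx : x ∉ gap β) : ε 0 = digit β x := by
  have hβ₀ : 0 < β := by linarith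
  have hx' := h.2
  rw [value_eq_head_add_tail hβ h.1] at hx'
  have htail := value_le hβ fun n => h.1 (n + 1)
  have htail₀ := value_nonneg hβ₀.le fun n => ε (n + 1)
  unfold digit
  split_ifs with hlt
  · by_contra hne
    have : ε 0 = 1 := by have := h.1 0; omega
    rw [this, Nat.cast_one] at hx'
    rw [hx', div_lt_div_iff_of_pos_right hβ₀] at hlt
    linarith
  · have hgt : 1 / (β * (β - 1)) < x := by
      simp only [gap, Set.mem_Icc, not_and, not_le] at hx
      exact hx (not_lt.mp hlt)
    by_contra hne
    have : ε 0 = 0 := by have := h.1 0; omega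
    rw [this, Nat.cast_zero, zero_add] at hx'
    rw [hx', div_mul_eq_div_div_swap, div_lt_div_iff_of_pos_right hβ₀] at hgt
    linarith

lemma mapsTo_T (hβ : 1 < β) (hβ₂ : β ≤ 2) :
    Set.MapsTo (T β) (Set.Icc 0 (1 / (β - 1))) (Set.Icc 0 (1 / (β - 1))) := by
  have hβ₀ : 0 < β := by linarith
  have hβ₁ : 0 < β - 1 := by linarith
  rintro y ⟨hy₀, hy₁⟩
  unfold T
  split_ifs with hlt
  · rw [lt_div_iff₀ hβ₀] at hlt
    refine ⟨by positivity, ?_⟩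
    rw [le_div_iff₀ hβ₁]
    nlinarith
  · rw [not_lt, div_le_iff₀ hβ₀] at hlt
    rw [le_div_iff₀ hβ₁] at hy₁
    refine ⟨by linarith, ?_⟩
    rw [le_div_iff₀ hβ₁]
    nlinarith

lemma isExpansion_digit_orbit (hβ : 1 < β) {o : ℕ → ℝ} (ho : ∀ n, o n ∈ Set.Icc 0 (1 / (β - 1)))
    (hT : ∀ n, o (n + 1) = T β (o n)) : IsExpansion β (o 0) fun n => digit β (o n) := by
  have hβ₀ : 0 < β := by linarith
  refine ⟨fun n => digit_le_one β (o n), ?_⟩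
  have hpartial : ∀ n, ∑ k ∈ Finset.range n, (digit β (o k) : ℝ) / β ^ (k + 1) =
      o 0 - o n / β ^ n := by
    intro n
    induction n with
    | zero => simp
    | succ n ih =>
      rw [Finset.sum_range_succ, ih, hT, T_eq, pow_succ]
      field_simp
      ring
  have hrem : Tendsto (fun n => o n / β ^ n) atTop (𝓝 0) := by
    have hgeom := (tendsto_pow_atTop_nhds_zero_of_lt_one (by positivity)
      (inv_lt_one_of_one_lt₀ hβ)).const_mul (1 / (β - 1))
    rw [mul_zero] at hgeom
    refine squeeze_zero (fun n => div_nonneg (ho n).1 (by positivity)) (fun n => ?_) hgeom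
    rw [inv_pow, ← div_eq_mul_inv]
    gcongr
    exact (ho n).2
  have hsum : HasSum (fun n => (digit β (o n) : ℝ) / β ^ (n + 1)) (o 0) := by
    rw [(summable_div_pow hβ fun n => digit_le_one β (o n)).hasSum_iff_tendsto_nat]
    simpa only [hpartial, sub_zero] using tendsto_const_nhds.sub hrem
  exact hsum.tsum_eq.symm

lemma exists_isExpansion (hβ : 1 < β) (hβ₂ : β ≤ 2) {y : ℝ}
    (hy : y ∈ Set.Icc 0 (1 / (β - 1))) : ∃ ε, IsExpansion β y ε :=
  ⟨_, isExpansion_digit_orbit (o := fun n => (T β)^[n] y) hβ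
    (fun n => (mapsTo_T hβ hβ₂).iterate n hy)
    (fun _ => Function.iterate_succ_apply' _ _ _)⟩

lemma not_existsUnique_isExpansion_of_mem_gap (hβ : 1 < β) (hβ₂ : β ≤ 2) {y : ℝ}
    (hy : y ∈ gap β) : ¬∃! ε, IsExpansion β y ε := by
  have hβ₀ : 0 < β := by linarith
  have hβ₁ : 0 < β - 1 := by linarith
  obtain ⟨hy₀, hy₁⟩ := hy
  rw [div_le_iff₀ hβ₀] at hy₀
  rw [le_div_iff₀ (by positivity)] at hy₁
  have hmem : ∀ d : ℕ, d ≤ 1 → β * y - d ∈ Set.Icc 0 (1 / (β - 1)) := by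
    intro d hd
    have hd' : (d : ℝ) ≤ 1 := by exact_mod_cast hd
    refine ⟨by linarith, ?_⟩
    rw [le_div_iff₀ hβ₁]
    nlinarith [Nat.cast_nonneg (α := ℝ) d]
  obtain ⟨δ₀, h₀⟩ := exists_isExpansion hβ hβ₂ (hmem 0 zero_le_one)
  obtain ⟨δ₁, h₁⟩ := exists_isExpansion hβ hβ₂ (hmem 1 le_rfl)
  intro huniq
  exact zero_ne_one (Stream'.cons_injective2 (huniq.unique (h₀.cons hβ zero_le_one)
    (h₁.cons hβ le_rfl))).1

lemma existsUnique_isExpansion_T (hβ : 1 < β) (hβ₂ : β ≤ 2) {y : ℝ}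
    (h : ∃! ε, IsExpansion β y ε) : ∃! δ, IsExpansion β (T β y) δ := by
  obtain ⟨ε, hε⟩ := h.exists
  obtain ⟨δ, hδ⟩ := exists_isExpansion hβ hβ₂ (mapsTo_T hβ hβ₂ (mem_Icc_of_isExpansion hβ hε))
  refine ⟨δ, hδ, fun δ' hδ' => ?_⟩
  rw [T_eq] at hδ hδ'
  exact Stream'.cons_injective_right _
    (h.unique (hδ'.cons hβ (digit_le_one β y)) (hδ.cons hβ (digit_le_one β y)))

lemma IsExpansion.eq_digit_orbit (hβ : 1 < β) {o : ℕ → ℝ}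
    (hgap : ∀ n, o n ∉ gap β) (hT : ∀ n, o (n + 1) = T β (o n))
    {ε : ℕ → ℕ} (h : IsExpansion β (o 0) ε) : ε = fun n => digit β (o n) := by
  suffices ∀ n k ε, IsExpansion β (o k) ε → ε n = digit β (o (k + n)) from
    funext fun n => by simpa using this n 0 ε h
  intro n
  induction n with
  | zero => exact fun k ε h => h.head_eq_digit hβ (hgap k)
  | succ n ih =>
    intro k ε h
    have htail := h.tail hβ
    rw [h.head_eq_digit hβ (hgap k), ← T_eq, ← hT] at htail
    rw [ih (k + 1) _ htail, add_assoc, add_comm 1 n]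

end BetaExpansion

open BetaExpansion

theorem unique_representation_iff_orbit_avoids_gap_general
    (β : ℝ) (hβ : β ∈ Set.Ioo (1 : ℝ) 2) (x : ℝ) :
    (∃! ε : ℕ → ℕ, (∀ n, ε n ≤ 1) ∧ x = ∑' n : ℕ, (ε n : ℝ) / β ^ (n + 1)) ↔
    (∃ o : ℕ → ℝ, o 0 = x ∧ ∀ n : ℕ,
      o n ∈ Set.Icc (0 : ℝ) (1 / (β - 1)) ∧
      o n ∉ Set.Icc (1 / β) (1 / (β * (β - 1))) ∧
      o (n + 1) = if o n < 1 / β then β * o n else β * o n - 1) := by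
  obtain ⟨hβ₁, hβ₂⟩ := hβ
  constructor
  · intro hx
    have horbit : ∀ n, ∃! ε, IsExpansion β ((T β)^[n] x) ε := by
      intro n
      induction n with
      | zero => exact hx
      | succ n ih =>
        rw [Function.iterate_succ_apply']
        exact existsUnique_isExpansion_T hβ₁ hβ₂.le ih
    refine ⟨fun n => (T β)^[n] x, rfl, fun n => ⟨?_, ?_, Function.iterate_succ_apply' _ _ _⟩⟩
    · exact mem_Icc_of_isExpansion hβ₁ (horbit n).exists.choose_spec
    · exact fun hgap => not_existsUnique_isExpansion_of_mem_gap hβ₁ hβ₂.le hgap (horbit n)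
  · rintro ⟨o, rfl, ho⟩
    exact ⟨_, isExpansion_digit_orbit hβ₁ (fun n => (ho n).1) (fun n => (ho n).2.2),
      fun _ hε => IsExpansion.eq_digit_orbit hβ₁ (fun n => (ho n).2.1) (fun n => (ho n).2.2) hε⟩

/-- for `β ∈ (1,2)`, `x ∈ (0, 1/(β-1))` has a unique binary
`β`-representation iff the forward orbit of `x` under the map with a gap
`T_β` (`βx` below the gap, `βx - 1` above) is defined for all `n ≥ 0` and
never enters the gap `Δ_β = [1/β, 1/(β(β-1))]`. -/
theorem unique_representation_iff_orbit_avoids_gap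
    (β : ℝ) (hβ : β ∈ Set.Ioo (1 : ℝ) 2) (x : ℝ) (hx : x ∈ Set.Ioo (0 : ℝ) (1 / (β - 1))) :
    (∃! ε : ℕ → ℕ, (∀ n, ε n ≤ 1) ∧ x = ∑' n : ℕ, (ε n : ℝ) / β ^ (n + 1)) ↔
    (∃ o : ℕ → ℝ, o 0 = x ∧ ∀ n : ℕ,
      o n ∈ Set.Icc (0 : ℝ) (1 / (β - 1)) ∧
      o n ∉ Set.Icc (1 / β) (1 / (β * (β - 1))) ∧
      o (n + 1) = if o n < 1 / β then β * o n else β * o n - 1) :=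
  unique_representation_iff_orbit_avoids_gap_general β hβ x
end

section
/- For any non-integer β ∈ (1,2), the set R_β(x) of all binary sequences ε ∈ {0,1}^ℕ with x = Σ ε_n β^{-n} has cardinality continuum for Lebesgue-almost every x ∈ (0, 1/(β-1)). -/
/-!
Write `M = 1/(β-1)`. A remainder `v ∈ [0, M)` leaves a free choice of the next digit exactly
when it lies in the switch region `1 ≤ β v < M`, where both `β v` and `β v - 1` stay in `[0, M)`.

The points of `[0, M)` whose greedy orbit never meets the switch region form a porous set:
infinitely often the greedy cylinder of such a point `y` is mapped by the `k`-th iterate `G^k`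
of the greedy map affinely onto all of `[0, 1)`, and the part of it sent into the switch region
is then a hole of length proportional to `β^{-k}` in the ball of radius `β^{-k}` about `y`. By Lebesgue's density theorem this set is
null, hence so are its countably many affine preimages `x ↦ β^n (x - ∑_{k<n} w_k β^{-(k+1)})`.
For `x` outside all of them, every remainder of every expansion of `x` reaches the switch region
under the greedy map. So the expansion that follows the greedy digits and spends the next bit of
an arbitrary `a : ℕ → Bool` at each visit to the switch region visits it infinitely often, and
distinct `a` give distinct expansions of `x`.
-/

open MeasureTheory Filter Topology Set

lemma volume_inter_closedBall_div_le_of_hole {s : Set ℝ} {y r δ a : ℝ} (hr : 0 < r) (hδ : 0 ≤ δ)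
    (hhole : Ico a (a + δ * r) ⊆ Metric.closedBall y r \ s) :
    volume (s ∩ Metric.closedBall y r) / volume (Metric.closedBall y r)
      ≤ ENNReal.ofReal (1 - δ / 2) := by
  have hsub : s ∩ Metric.closedBall y r ⊆ Metric.closedBall y r \ Ico a (a + δ * r) :=
    fun z hz => ⟨hz.2, fun hzh => (hhole hzh).2 hz.1⟩
  rw [Real.volume_closedBall]
  apply ENNReal.div_le_of_le_mul
  calc volume (s ∩ Metric.closedBall y r)
      ≤ volume (Metric.closedBall y r \ Ico a (a + δ * r)) := measure_mono hsub
    _ = ENNReal.ofReal (2 * r) - ENNReal.ofReal (δ * r) := by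
      rw [measure_sdiff (hhole.trans sdiff_subset) nullMeasurableSet_Ico (by simp),
        Real.volume_closedBall, Real.volume_Ico, add_sub_cancel_left]
    _ = ENNReal.ofReal (1 - δ / 2) * ENNReal.ofReal (2 * r) := by
      rw [← ENNReal.ofReal_sub _ (by positivity), ← ENNReal.ofReal_mul' (by positivity)]
      ring_nf

theorem volume_eq_zero_of_porous {s : Set ℝ} (hs : MeasurableSet s) {δ : ℝ} (hδ : 0 < δ)
    (hporous : ∀ y ∈ s, ∃ᶠ r in 𝓝[>] 0, ∃ a, Ico a (a + δ * r) ⊆ Metric.closedBall y r \ s) :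
    volume s = 0 := by
  refine measure_eq_zero_iff_ae_notMem.mpr ?_
  filter_upwards [Besicovitch.ae_tendsto_measure_inter_div_of_measurableSet volume hs]
    with y hdensity hy
  rw [indicator_of_mem hy, Pi.one_apply] at hdensity
  have hlt : ENNReal.ofReal (1 - δ / 2) < 1 := ENNReal.ofReal_lt_one.mpr (by linarith)
  obtain ⟨r, ⟨a, hhole⟩, hr, hbig⟩ := ((hporous y hy).and_eventually
    (eventually_mem_nhdsWithin.and (hdensity.eventually (lt_mem_nhds hlt)))).exists
  exact (volume_inter_closedBall_div_le_of_hole hr hδ.le hhole).not_gt hbig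

namespace BetaExpansion

noncomputable def remainder (β : ℝ) (d : ℕ → ℕ) (x : ℝ) (n : ℕ) : ℝ :=
  β ^ n * (x - ∑ k ∈ Finset.range n, (d k : ℝ) / β ^ (k + 1))

section Remainder

variable {β : ℝ} {d : ℕ → ℕ} {x : ℝ}

@[simp]
lemma remainder_zero : remainder β d x 0 = x := by
  simp [remainder]

lemma remainder_succ (hβ : β ≠ 0) (n : ℕ) :
    remainder β d x (n + 1) = β * remainder β d x n - d n := by
  simp only [remainder, Finset.sum_range_succ]
  field_simp
  ring

lemma eq_remainder_of_succ (hβ : β ≠ 0) {v : ℕ → ℝ} (h0 : v 0 = x)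
    (hsucc : ∀ n, v (n + 1) = β * v n - d n) (n : ℕ) : v n = remainder β d x n := by
  induction n with
  | zero => simpa using h0
  | succ n ih => rw [hsucc, ih, remainder_succ hβ]

lemma hasSum_of_abs_remainder_le (hβ : 1 < β) {C : ℝ} (hC : ∀ n, |remainder β d x n| ≤ C) :
    HasSum (fun n => (d n : ℝ) / β ^ (n + 1)) x := by
  have hβ0 : 0 < β := zero_lt_one.trans hβ
  rw [hasSum_iff_tendsto_nat_of_nonneg (fun n => by positivity)]
  have hpartial : ∀ n, ∑ k ∈ Finset.range n, (d k : ℝ) / β ^ (k + 1)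
      = x - remainder β d x n * β⁻¹ ^ n := fun n => by
    rw [remainder, inv_pow, mul_comm, inv_mul_cancel_left₀ (by positivity)]
    ring
  have hgeom : Tendsto (fun n => C * β⁻¹ ^ n) atTop (𝓝 0) := by
    simpa using (tendsto_pow_atTop_nhds_zero_of_lt_one (by positivity)
      (inv_lt_one_of_one_lt₀ hβ)).const_mul C
  have hsmall : Tendsto (fun n => remainder β d x n * β⁻¹ ^ n) atTop (𝓝 0) :=
    squeeze_zero_norm (fun n => by
      rw [Real.norm_eq_abs, abs_mul, abs_of_pos (a := β⁻¹ ^ n) (by positivity)]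
      exact mul_le_mul_of_nonneg_right (hC n) (by positivity)) hgeom
  simpa [hpartial] using hsmall.const_sub x

end Remainder

noncomputable def maxSum (β : ℝ) : ℝ := 1 / (β - 1)

noncomputable def greedyDigit (β y : ℝ) : ℕ := if β * y < 1 then 0 else 1

noncomputable def greedyMap (β y : ℝ) : ℝ := β * y - greedyDigit β y

def switchRegion (β : ℝ) : Set ℝ := {y | 1 ≤ β * y ∧ β * y < maxSum β}

noncomputable instance (β y : ℝ) : Decidable (y ∈ switchRegion β) :=
  inferInstanceAs (Decidable (1 ≤ β * y ∧ β * y < maxSum β))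

def switchFree (β : ℝ) : Set ℝ :=
  {y | y ∈ Ico 0 (maxSum β) ∧ ∀ k, (greedyMap β)^[k] y ∉ switchRegion β}

section Greedy

variable {β : ℝ}

lemma one_lt_maxSum (hβ1 : 1 < β) (hβ2 : β < 2) : 1 < maxSum β := by
  rw [maxSum, lt_div_iff₀ (by linarith)]
  linarith

lemma mul_maxSum (hβ1 : 1 < β) : β * maxSum β = maxSum β + 1 := by
  have : β - 1 ≠ 0 := by linarith
  rw [maxSum]
  field_simp
  ring

lemma greedyDigit_le_one (y : ℝ) : greedyDigit β y ≤ 1 := by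
  unfold greedyDigit
  split_ifs <;> simp

lemma mapsTo_greedyMap (hβ1 : 1 < β) (hβ2 : β < 2) :
    MapsTo (greedyMap β) (Ico 0 (maxSum β)) (Ico 0 (maxSum β)) := by
  rintro y ⟨hy0, hyM⟩
  have hβy : β * y < maxSum β + 1 := by
    rw [← mul_maxSum hβ1]
    exact mul_lt_mul_of_pos_left hyM (by linarith)
  have := one_lt_maxSum hβ1 hβ2
  unfold greedyMap greedyDigit
  split_ifs with h
  · rw [Nat.cast_zero, sub_zero]
    exact ⟨mul_nonneg (by linarith) hy0, by linarith⟩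
  · rw [Nat.cast_one]
    constructor <;> linarith

lemma measurable_greedyMap : Measurable (greedyMap β) := by
  have hdigit : Measurable fun y => (greedyDigit β y : ℝ) := by
    unfold greedyDigit
    push_cast
    exact Measurable.ite (measurableSet_lt (by fun_prop) measurable_const) measurable_const
      measurable_const
  exact (measurable_const_mul β).sub hdigit

lemma measurableSet_switchFree : MeasurableSet (switchFree β) := by
  have hS : MeasurableSet (switchRegion β) :=
    (measurableSet_le measurable_const (measurable_const_mul β)).inter
      (measurableSet_lt (measurable_const_mul β) measurable_const)
  simp only [switchFree, ofPred_and, ofPred_forall]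
  exact measurableSet_Ico.inter (.iInter fun k => measurable_greedyMap.iterate k hS.compl)

end Greedy

noncomputable def greedyDigits (β y : ℝ) (n : ℕ) : ℕ := greedyDigit β ((greedyMap β)^[n] y)

/-- `(greedyMap β)^[n]` maps the points sharing the first `n` greedy digits of `y`
onto `[0, cylinderEnd β y n)`. -/
noncomputable def cylinderEnd (β y : ℝ) : ℕ → ℝ
  | 0 => maxSum β
  | n + 1 => if greedyDigits β y n = 0 then min (β * cylinderEnd β y n) 1
      else β * cylinderEnd β y n - 1

section Cylinder

variable {β y : ℝ}

lemma greedyMap_iterate_eq_remainder (hβ : β ≠ 0) (n : ℕ) :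
    (greedyMap β)^[n] y = remainder β (greedyDigits β y) y n :=
  eq_remainder_of_succ (v := fun n => (greedyMap β)^[n] y) hβ rfl
    (fun n => by rw [Function.iterate_succ_apply']; rfl) n

lemma greedyDigits_eq_zero_iff (n : ℕ) :
    greedyDigits β y n = 0 ↔ β * (greedyMap β)^[n] y < 1 := by
  unfold greedyDigits greedyDigit
  split_ifs with h <;> simp [h]

lemma greedyDigits_eq_one_of_ne_zero {n : ℕ} (h : greedyDigits β y n ≠ 0) :
    greedyDigits β y n = 1 := by
  have := greedyDigit_le_one (β := β) ((greedyMap β)^[n] y)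
  unfold greedyDigits at h ⊢
  omega

lemma greedyMap_iterate_succ (n : ℕ) :
    (greedyMap β)^[n + 1] y = β * (greedyMap β)^[n] y - greedyDigits β y n := by
  rw [Function.iterate_succ_apply']
  rfl

lemma greedyMap_iterate_lt_cylinderEnd (hβ : 0 < β) (hy : y < maxSum β) (n : ℕ) :
    (greedyMap β)^[n] y < cylinderEnd β y n := by
  induction n with
  | zero => exact hy
  | succ n ih =>
    have hlt := mul_lt_mul_of_pos_left ih hβ
    rw [greedyMap_iterate_succ, cylinderEnd]
    split_ifs with h
    · rw [h, Nat.cast_zero, sub_zero]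
      exact lt_min hlt ((greedyDigits_eq_zero_iff n).mp h)
    · rw [greedyDigits_eq_one_of_ne_zero h, Nat.cast_one]
      linarith

lemma cylinderEnd_le_maxSum (hβ1 : 1 < β) (hβ2 : β < 2) (n : ℕ) :
    cylinderEnd β y n ≤ maxSum β := by
  induction n with
  | zero => exact le_rfl
  | succ n ih =>
    rw [cylinderEnd]
    split_ifs
    · exact (min_le_right _ _).trans (one_lt_maxSum hβ1 hβ2).le
    · have := mul_le_mul_of_nonneg_left ih (by linarith : 0 ≤ β)
      linarith [mul_maxSum hβ1]

lemma cylinderEnd_succ_eq_one_or (n : ℕ) :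
    cylinderEnd β y (n + 1) = 1 ∨ cylinderEnd β y (n + 1) - (greedyMap β)^[n + 1] y
      = β * (cylinderEnd β y n - (greedyMap β)^[n] y) := by
  rw [greedyMap_iterate_succ, cylinderEnd]
  split_ifs with h
  · rw [h, Nat.cast_zero, sub_zero]
    rcases le_total (β * cylinderEnd β y n) 1 with hle | hle
    · exact Or.inr (by rw [min_eq_left hle]; ring)
    · exact Or.inl (min_eq_right hle)
  · rw [greedyDigits_eq_one_of_ne_zero h, Nat.cast_one]
    exact Or.inr (by ring)

lemma frequently_cylinderEnd_eq_one (hβ1 : 1 < β) (hβ2 : β < 2) (hy : y ∈ Ico 0 (maxSum β)) :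
    ∃ᶠ n in atTop, cylinderEnd β y n = 1 := by
  rw [frequently_atTop]
  intro N
  by_contra! hne
  set gap := cylinderEnd β y N - (greedyMap β)^[N] y
  have hgrow : ∀ j, cylinderEnd β y (N + j) - (greedyMap β)^[N + j] y = β ^ j * gap := by
    intro j
    induction j with
    | zero => simp [gap]
    | succ j ih =>
      rw [← add_assoc, ((cylinderEnd_succ_eq_one_or _).resolve_left (hne _ (by omega))), ih]
      ring
  have hgap : 0 < gap := sub_pos.mpr (greedyMap_iterate_lt_cylinderEnd (by linarith) hy.2 N)
  obtain ⟨j, hj⟩ := pow_unbounded_of_one_lt (maxSum β / gap) hβ1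
  rw [div_lt_iff₀ hgap, ← hgrow] at hj
  have := ((mapsTo_greedyMap hβ1 hβ2).iterate (N + j) hy).1
  linarith [cylinderEnd_le_maxSum (y := y) hβ1 hβ2 (N + j)]

lemma mem_cylinder_of_succ (hβ : 0 < β) {n : ℕ} {w : ℝ}
    (hw : β * w - greedyDigits β y n ∈ Ico 0 (cylinderEnd β y (n + 1))) :
    w ∈ Ico 0 (cylinderEnd β y n) ∧ greedyDigit β w = greedyDigits β y n := by
  obtain ⟨hw0, hwend⟩ := hw
  rw [cylinderEnd] at hwend
  split_ifs at hwend with h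
  · rw [h, Nat.cast_zero, sub_zero] at hw0 hwend
    rw [h, greedyDigit, if_pos (hwend.trans_le (min_le_right _ _))]
    exact ⟨⟨nonneg_of_mul_nonneg_right hw0 hβ,
      lt_of_mul_lt_mul_left (hwend.trans_le (min_le_left _ _)) hβ.le⟩, rfl⟩
  · have hd := greedyDigits_eq_one_of_ne_zero h
    rw [hd, Nat.cast_one] at hw0 hwend
    rw [hd, greedyDigit, if_neg (by linarith)]
    exact ⟨⟨nonneg_of_mul_nonneg_right (by linarith) hβ,
      lt_of_mul_lt_mul_left (by linarith) hβ.le⟩, rfl⟩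

lemma greedyMap_iterate_eq_remainder_of_mem (hβ : 0 < β) {z : ℝ} {n : ℕ}
    (hz : remainder β (greedyDigits β y) z n ∈ Ico 0 (cylinderEnd β y n)) :
    (greedyMap β)^[n] z = remainder β (greedyDigits β y) z n := by
  induction n with
  | zero => simp
  | succ n ih =>
    rw [remainder_succ hβ.ne'] at hz ⊢
    obtain ⟨hmem, hdigit⟩ := mem_cylinder_of_succ hβ hz
    rw [Function.iterate_succ_apply', ih hmem, greedyMap, hdigit]

end Cylinder

section Porosity

variable {β y : ℝ}

lemma exists_hole_of_cylinderEnd_eq_one (hβ1 : 1 < β) (hβ2 : β < 2)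
    (hy : y ∈ Ico 0 (maxSum β)) {k : ℕ} (hk : cylinderEnd β y k = 1) :
    ∃ a, Ico a (a + (min (maxSum β) β - 1) / β * β⁻¹ ^ k) ⊆
      Metric.closedBall y (β⁻¹ ^ k) \ switchFree β := by
  have hβ : 0 < β := by linarith
  set s := ∑ j ∈ Finset.range k, (greedyDigits β y j : ℝ) / β ^ (j + 1)
  set r := β⁻¹ ^ k
  have hr : 0 < r := by positivity
  have hrem : ∀ z, remainder β (greedyDigits β y) z k = (z - s) / r := fun z => by
    show β ^ k * (z - s) = (z - s) / β⁻¹ ^ k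
    rw [inv_pow, div_inv_eq_mul, mul_comm]
  have hyk : (y - s) / r ∈ Ico 0 1 := by
    rw [← hrem, ← greedyMap_iterate_eq_remainder hβ.ne', ← hk]
    exact ⟨((mapsTo_greedyMap hβ1 hβ2).iterate k hy).1,
      greedyMap_iterate_lt_cylinderEnd hβ hy.2 k⟩
  rw [mem_Ico, le_div_iff₀ hr, zero_mul, div_lt_one hr] at hyk
  -- `G^k` maps `[s, s + r)` affinely onto `[0, 1)`; the hole is the part it sends into the
  -- switch region.
  refine ⟨s + r / β, fun z hz => ?_⟩
  have hβz : r ≤ β * (z - s) ∧ β * (z - s) < min (maxSum β) β * r := by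
    have h1 : β * (r / β) = r := mul_div_cancel₀ r hβ.ne'
    have h2 : β * ((min (maxSum β) β - 1) / β) = min (maxSum β) β - 1 :=
      mul_div_cancel₀ _ hβ.ne'
    constructor <;> nlinarith [hz.1, hz.2]
  have hzs : 0 ≤ z - s ∧ z - s < r := by
    have := min_le_right (maxSum β) β
    constructor <;> nlinarith
  have hw : (z - s) / r ∈ switchRegion β ∩ Ico 0 1 := by
    refine ⟨⟨?_, ?_⟩, div_nonneg hzs.1 hr.le, (div_lt_one hr).mpr hzs.2⟩
    · rw [← mul_div_assoc, one_le_div hr]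
      exact hβz.1
    · rw [← mul_div_assoc, div_lt_iff₀ hr]
      exact hβz.2.trans_le (mul_le_mul_of_nonneg_right (min_le_left _ _) hr.le)
  refine ⟨?_, fun hzA => hzA.2 k ?_⟩
  · rw [Metric.mem_closedBall, Real.dist_eq, abs_le]
    constructor <;> linarith
  · rw [greedyMap_iterate_eq_remainder_of_mem hβ (by rw [hk, hrem]; exact hw.2), hrem]
    exact hw.1

theorem volume_switchFree (hβ1 : 1 < β) (hβ2 : β < 2) : volume (switchFree β) = 0 := by
  have hβ : 0 < β := by linarith
  have hδ : 0 < (min (maxSum β) β - 1) / β :=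
    div_pos (sub_pos.mpr (lt_min (one_lt_maxSum hβ1 hβ2) hβ1)) hβ
  have hradii : Tendsto (fun k => β⁻¹ ^ k) atTop (𝓝[>] 0) :=
    tendsto_nhdsWithin_iff.mpr ⟨tendsto_pow_atTop_nhds_zero_of_lt_one (by positivity)
      (inv_lt_one_of_one_lt₀ hβ1), .of_forall fun k => mem_Ioi.mpr (by positivity)⟩
  refine volume_eq_zero_of_porous measurableSet_switchFree hδ fun y hy => hradii.frequently ?_
  exact (frequently_cylinderEnd_eq_one hβ1 hβ2 hy.1).mono
    fun k hk => exists_hole_of_cylinderEnd_eq_one hβ1 hβ2 hy.1 hk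

end Porosity

def exceptionalSet (β : ℝ) : Set ℝ :=
  ⋃ (n : ℕ) (w : Fin n → ℕ),
    {x | β ^ n * (x - ∑ k, (w k : ℝ) / β ^ ((k : ℕ) + 1)) ∈ switchFree β}

section Exceptional

variable {β x : ℝ}

lemma volume_preimage_mul_sub_eq_zero {a : ℝ} (ha : a ≠ 0) (c : ℝ) {s : Set ℝ}
    (hs : volume s = 0) : volume ((fun x => a * (x - c)) ⁻¹' s) = 0 := by
  have : (fun x => a * (x - c)) ⁻¹' s = (fun x => x + -c) ⁻¹' ((fun x => a * x) ⁻¹' s) := by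
    ext
    simp [sub_eq_add_neg]
  rw [this, measure_preimage_add_right, Real.volume_preimage_mul_left ha, hs, mul_zero]

theorem volume_exceptionalSet (hβ1 : 1 < β) (hβ2 : β < 2) : volume (exceptionalSet β) = 0 :=
  measure_iUnion_null fun n => measure_iUnion_null fun _ =>
    volume_preimage_mul_sub_eq_zero (by positivity) _ (volume_switchFree hβ1 hβ2)

lemma remainder_notMem_switchFree (hx : x ∉ exceptionalSet β) (d : ℕ → ℕ) (n : ℕ) :
    remainder β d x n ∉ switchFree β := fun h => hx <| mem_iUnion.mpr ⟨n, mem_iUnion.mpr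
    ⟨fun k => d k, by
      rwa [mem_ofPred_eq, Fin.sum_univ_eq_sum_range (fun k => (d k : ℝ) / β ^ (k + 1))]⟩⟩

end Exceptional

noncomputable def branchDigit (β : ℝ) (a : ℕ → Bool) (s : ℝ × ℕ) : ℕ :=
  if s.1 ∈ switchRegion β then (a s.2).toNat else greedyDigit β s.1

noncomputable def branchStep (β : ℝ) (a : ℕ → Bool) (s : ℝ × ℕ) : ℝ × ℕ :=
  (β * s.1 - branchDigit β a s, s.2 + if s.1 ∈ switchRegion β then 1 else 0)

noncomputable def branchOrbit (β x : ℝ) (a : ℕ → Bool) (n : ℕ) : ℝ × ℕ :=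
  (branchStep β a)^[n] (x, 0)

noncomputable def branchDigits (β x : ℝ) (a : ℕ → Bool) (n : ℕ) : ℕ :=
  branchDigit β a (branchOrbit β x a n)

section Branching

variable {β x : ℝ} {a : ℕ → Bool}

lemma branchDigit_le_one (s : ℝ × ℕ) : branchDigit β a s ≤ 1 := by
  unfold branchDigit
  split_ifs
  exacts [Bool.toNat_le _, greedyDigit_le_one _]

lemma branchOrbit_succ (n : ℕ) :
    branchOrbit β x a (n + 1) = branchStep β a (branchOrbit β x a n) :=
  Function.iterate_succ_apply' _ _ _

lemma mapsTo_branchStep (hβ1 : 1 < β) (hβ2 : β < 2) :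
    MapsTo (branchStep β a) (Prod.fst ⁻¹' Ico 0 (maxSum β)) (Prod.fst ⁻¹' Ico 0 (maxSum β)) := by
  rintro ⟨v, m⟩ hv
  simp only [mem_preimage, branchStep, branchDigit] at hv ⊢
  split_ifs with h
  · obtain ⟨h1, hM⟩ := h
    cases a m <;>
      simp only [Bool.toNat_false, Bool.toNat_true, Nat.cast_zero, Nat.cast_one, sub_zero] <;>
      constructor <;> linarith
  · exact mapsTo_greedyMap hβ1 hβ2 hv

lemma branchOrbit_fst_mem (hβ1 : 1 < β) (hβ2 : β < 2) (hx : x ∈ Ico 0 (maxSum β)) (n : ℕ) :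
    (branchOrbit β x a n).1 ∈ Ico 0 (maxSum β) :=
  (mapsTo_branchStep hβ1 hβ2).iterate n hx

lemma branchOrbit_fst_eq_remainder (hβ : β ≠ 0) (n : ℕ) :
    (branchOrbit β x a n).1 = remainder β (branchDigits β x a) x n :=
  eq_remainder_of_succ (v := fun n => (branchOrbit β x a n).1) hβ rfl
    (fun n => by rw [branchOrbit_succ]; rfl) n

lemma branchOrbit_snd_eq_count (n : ℕ) :
    (branchOrbit β x a n).2
      = Nat.count (fun k => (branchOrbit β x a k).1 ∈ switchRegion β) n := by
  induction n with
  | zero => rfl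
  | succ n ih => rw [branchOrbit_succ, Nat.count_succ, ← ih]; rfl

lemma exists_switch_of_greedyMap_iterate_mem (j : ℕ) : ∀ N,
    (greedyMap β)^[j] (branchOrbit β x a N).1 ∈ switchRegion β →
      ∃ k ≥ N, (branchOrbit β x a k).1 ∈ switchRegion β := by
  induction j with
  | zero => exact fun N hN => ⟨N, le_rfl, hN⟩
  | succ j ih =>
    intro N hN
    by_cases hS : (branchOrbit β x a N).1 ∈ switchRegion β
    · exact ⟨N, le_rfl, hS⟩
    have hgreedy : (branchOrbit β x a (N + 1)).1 = greedyMap β (branchOrbit β x a N).1 := by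
      rw [branchOrbit_succ]
      simp only [branchStep, branchDigit, if_neg hS]
      rfl
    obtain ⟨k, hk, hkS⟩ := ih (N + 1) (by rwa [hgreedy, ← Function.iterate_succ_apply])
    exact ⟨k, by omega, hkS⟩

lemma infinite_setOf_branchOrbit_mem_switchRegion (hβ1 : 1 < β) (hβ2 : β < 2)
    (hx : x ∈ Ico 0 (maxSum β)) (hxE : x ∉ exceptionalSet β) :
    {k | (branchOrbit β x a k).1 ∈ switchRegion β}.Infinite := by
  refine Nat.frequently_atTop_iff_infinite.mp (frequently_atTop.mpr fun N => ?_)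
  have hfree : (branchOrbit β x a N).1 ∉ switchFree β := by
    rw [branchOrbit_fst_eq_remainder (by positivity)]
    exact remainder_notMem_switchFree hxE _ N
  obtain ⟨j, hj⟩ : ∃ j, (greedyMap β)^[j] (branchOrbit β x a N).1 ∈ switchRegion β := by
    by_contra! h
    exact hfree ⟨branchOrbit_fst_mem hβ1 hβ2 hx N, h⟩
  exact exists_switch_of_greedyMap_iterate_mem j N hj

lemma branchDigits_injective
    (hinf : ∀ a, {k | (branchOrbit β x a k).1 ∈ switchRegion β}.Infinite) :
    Function.Injective (branchDigits β x) := by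
  intro a a' h
  have horbit : ∀ n, branchOrbit β x a n = branchOrbit β x a' n := by
    intro n
    induction n with
    | zero => rfl
    | succ n ih =>
      have hd : branchDigit β a (branchOrbit β x a n) = branchDigit β a' (branchOrbit β x a' n) :=
        congrFun h n
      rw [branchOrbit_succ, branchOrbit_succ, branchStep, branchStep, hd, ih]
  funext m
  have hS := Nat.nth_mem_of_infinite (hinf a) m
  have hcount := Nat.count_nth_of_infinite (hinf a) m
  rw [← branchOrbit_snd_eq_count] at hcount
  have hd := congrFun h (Nat.nth (fun k => (branchOrbit β x a k).1 ∈ switchRegion β) m)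
  simp only [branchDigits, branchDigit, ← horbit, if_pos hS, hcount] at hd
  revert hd
  cases a m <;> cases a' m <;> decide

end Branching

def representations (β x : ℝ) : Set (ℕ → ℕ) :=
  {ε | (∀ n, ε n ≤ 1) ∧ x = ∑' n, (ε n : ℝ) / β ^ (n + 1)}

section Representations

variable {β x : ℝ}

lemma branchDigits_mem_representations (hβ1 : 1 < β) (hβ2 : β < 2) (hx : x ∈ Ico 0 (maxSum β))
    (a : ℕ → Bool) : branchDigits β x a ∈ representations β x := by
  refine ⟨fun n => branchDigit_le_one _,
    (hasSum_of_abs_remainder_le hβ1 (C := maxSum β) fun n => ?_).tsum_eq.symm⟩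
  have hmem := branchOrbit_fst_mem (a := a) hβ1 hβ2 hx n
  rw [← branchOrbit_fst_eq_remainder (by positivity), abs_of_nonneg hmem.1]
  exact hmem.2.le

theorem mk_representations (hβ1 : 1 < β) (hβ2 : β < 2) (hx : x ∈ Ico 0 (maxSum β))
    (hxE : x ∉ exceptionalSet β) : Cardinal.mk (representations β x) = Cardinal.continuum := by
  apply le_antisymm
  · calc Cardinal.mk (representations β x) ≤ Cardinal.mk (ℕ → ℕ) := Cardinal.mk_set_le _
      _ = Cardinal.continuum := by simp
  · calc Cardinal.continuum = Cardinal.mk (ℕ → Bool) := by simp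
      _ ≤ Cardinal.mk (representations β x) := Cardinal.mk_le_of_injective
          (f := fun a => ⟨branchDigits β x a, branchDigits_mem_representations hβ1 hβ2 hx a⟩)
          fun a a' h => branchDigits_injective
            (fun _ => infinite_setOf_branchOrbit_mem_switchRegion hβ1 hβ2 hx hxE)
            (congrArg Subtype.val h)

end Representations

end BetaExpansion

/-- for any (automatically non-integer) `β ∈ (1,2)`, the set `R_β(x)` of
binary sequences representing `x` has cardinality continuum for Lebesgue-a.e.
`x ∈ (0, 1/(β-1))`. -/
theorem generic_point_has_continuum_many_representations
    (β : ℝ) (hβ : β ∈ Set.Ioo (1 : ℝ) 2) :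
    ∀ᵐ x : ℝ ∂volume, x ∈ Set.Ioo (0 : ℝ) (1 / (β - 1)) →
      Cardinal.mk {ε : ℕ → ℕ // (∀ n, ε n ≤ 1) ∧ x = ∑' n : ℕ, (ε n : ℝ) / β ^ (n + 1)} =
        Cardinal.continuum := by
  obtain ⟨hβ1, hβ2⟩ := hβ
  filter_upwards [measure_eq_zero_iff_ae_notMem.mp (BetaExpansion.volume_exceptionalSet hβ1 hβ2)]
    with x hxE hx
  exact BetaExpansion.mk_representations hβ1 hβ2 ⟨hx.1.le, hx.2⟩ hxE
end
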